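/- As x → +∞, the ratio of modified Bessel functions admits the asymptotic expansion I₁(x)/I₀(x) = 1 − 1/(2x) − 1/(8x²) − 1/(8x³) − 25/(128x⁴) + O(1/x⁵); that is, x⁴·(I₁(x)/I₀(x) − 1 + 1/(2x) + 1/(8x²) + 1/(8x³) + 25/(128x⁴)) = O(1/x) as x → +∞. -/

import Mathlib

open Asymptotics Filter

/-- The modified Bessel function of the first kind of order zero. -/
noncomputable def besselI0 (x : ℝ) : ℝ :=
  ∑' k : ℕ, (x / 2) ^ (2 * k) / (Nat.factorial k : ℝ) ^ 2

/-- The modified Bessel function of the first kind of order one. -/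
noncomputable def besselI1 (x : ℝ) : ℝ :=
  ∑' k : ℕ, (x / 2) ^ (2 * k + 1) / ((Nat.factorial k : ℝ) * (Nat.factorial (k + 1) : ℝ))

/-!
From `I₀' = I₁` and `I₁' = I₀ - I₁/x`, the ratio `r = I₁/I₀` solves the Riccati equation
`r' = 1 - r/x - r²`. The truncated expansion `A(x)` is a supersolution, with defect of
order `x⁻⁵`, and `A - x⁻⁵` is a subsolution for `x ≥ 5`. Near these barriers the equation
contracts at rate about `2r ≥ 1/2`, so perturbing them by `± c·exp(-(x-5)/2)` absorbs the
unknown value of `r` at `x = 5` (where only `0 ≤ r ≤ x/2` is known), and comparison traps `r`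
between `A - x⁻⁵ - exp(-(x-5)/2)` and `A + 2·exp(-(x-5)/2)`.
-/

open Nat Real Set

section HalfPowerSeries

lemma abs_half_pow_div_le {R y d : ℝ} {m k : ℕ} (hR : 1 ≤ R) (hy : |y| ≤ 2 * R)
    (hm : m ≤ 2 * k + 1) (hd : (k ! : ℝ) ≤ d) :
    |(y / 2) ^ m / d| ≤ R * (R ^ 2) ^ k / k ! := by
  have hk : (0 : ℝ) < k ! := by positivity
  have hpow : |y / 2| ^ m ≤ R ^ (2 * k + 1) := by
    calc |y / 2| ^ m ≤ R ^ m := by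
          gcongr; rw [abs_div, abs_two]; linarith
      _ ≤ R ^ (2 * k + 1) := pow_le_pow_right₀ hR hm
  rw [abs_div, abs_pow, abs_of_pos (hk.trans_le hd)]
  calc |y / 2| ^ m / d ≤ R ^ (2 * k + 1) / k ! := div_le_div₀ (by positivity) hpow hk hd
    _ = R * (R ^ 2) ^ k / k ! := by ring

lemma hasDerivAt_half_pow_div (m : ℕ) (d y : ℝ) :
    HasDerivAt (fun y => (y / 2) ^ m / d) (m * (y / 2) ^ (m - 1) * (1 / 2) / d) y := by
  have h : HasDerivAt (fun y : ℝ => y / 2) (1 / 2) y := (hasDerivAt_id y).div_const 2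
  exact (h.pow m).div_const d

lemma abs_deriv_half_pow_div_le {R y d : ℝ} {m k : ℕ} (hR : 1 ≤ R) (hy : |y| ≤ 2 * R)
    (hm : m ≤ 2 * k + 1) (hd : (k ! : ℝ) ≤ d) :
    |m * (y / 2) ^ (m - 1) * (1 / 2) / d| ≤ R * (2 * R ^ 2) ^ k / k ! := by
  have hm2 : (m : ℝ) / 2 ≤ 2 ^ k := by
    have : (m : ℝ) ≤ 2 * k + 1 := by exact_mod_cast hm
    have : (k : ℝ) + 1 ≤ 2 ^ k := by exact_mod_cast Nat.lt_two_pow_self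
    linarith
  calc |m * (y / 2) ^ (m - 1) * (1 / 2) / d| = m / 2 * |(y / 2) ^ (m - 1) / d| := by
        simp only [abs_div, abs_mul, Nat.abs_cast, abs_one, abs_two]; ring
    _ ≤ 2 ^ k * (R * (R ^ 2) ^ k / k !) :=
        mul_le_mul hm2 (abs_half_pow_div_le hR hy (by omega) hd) (abs_nonneg _) (by positivity)
    _ = R * (2 * R ^ 2) ^ k / k ! := by ring

variable {e : ℕ → ℕ} {d : ℕ → ℝ}

lemma summable_half_pow_div (he : ∀ k, e k ≤ 2 * k + 1) (hd : ∀ k, (k ! : ℝ) ≤ d k) (x : ℝ) :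
    Summable fun k => (x / 2) ^ e k / d k := by
  have hR : 1 ≤ |x| + 1 := by linarith [abs_nonneg x]
  refine .of_norm_bounded ((summable_pow_div_factorial ((|x| + 1) ^ 2)).mul_left (|x| + 1))
    fun k => ?_
  exact (abs_half_pow_div_le hR (by linarith [abs_nonneg x]) (he k) (hd k)).trans_eq
    (mul_div_assoc _ _ _)

lemma hasDerivAt_tsum_half_pow_div (he : ∀ k, e k ≤ 2 * k + 1) (hd : ∀ k, (k ! : ℝ) ≤ d k)
    (x : ℝ) :
    HasDerivAt (fun y => ∑' k, (y / 2) ^ e k / d k)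
      (∑' k, e k * (x / 2) ^ (e k - 1) * (1 / 2) / d k) x := by
  set R := |x| + 1
  have hR : 1 ≤ R := by linarith [abs_nonneg x]
  have hx : x ∈ Ioo (-(2 * R)) (2 * R) := by
    constructor <;> linarith [neg_abs_le x, le_abs_self x]
  refine hasDerivAt_tsum_of_isPreconnected
    ((summable_pow_div_factorial (2 * R ^ 2)).mul_left R) isOpen_Ioo isPreconnected_Ioo
    (fun k y _ => hasDerivAt_half_pow_div (e k) (d k) y) (fun k y hy => ?_) hx
    (summable_half_pow_div he hd x) hx
  exact (abs_deriv_half_pow_div_le hR (abs_le.2 ⟨hy.1.le, hy.2.le⟩) (he k) (hd k)).trans_eq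
    (mul_div_assoc _ _ _)

end HalfPowerSeries

lemma factorial_le_factorial_sq (k : ℕ) : (k ! : ℝ) ≤ (k ! : ℝ) ^ 2 :=
  le_self_pow₀ (one_le_cast.2 k.factorial_pos) two_ne_zero

lemma factorial_le_factorial_mul_factorial_succ (k : ℕ) :
    (k ! : ℝ) ≤ k ! * (k + 1)! :=
  le_mul_of_one_le_right (by positivity) (one_le_cast.2 (k + 1).factorial_pos)

lemma summable_besselI0_term (x : ℝ) :
    Summable fun k : ℕ => (x / 2) ^ (2 * k) / (k ! : ℝ) ^ 2 :=
  summable_half_pow_div (e := fun k => 2 * k) (fun _ => by omega) factorial_le_factorial_sq x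

lemma summable_besselI1_term (x : ℝ) :
    Summable fun k : ℕ => (x / 2) ^ (2 * k + 1) / ((k ! : ℝ) * (k + 1)!) :=
  summable_half_pow_div (e := fun k => 2 * k + 1) (fun _ => le_rfl)
    factorial_le_factorial_mul_factorial_succ x

lemma hasDerivAt_besselI0 (x : ℝ) : HasDerivAt besselI0 (besselI1 x) x := by
  have hterm (k : ℕ) :
      ((2 * (k + 1) : ℕ) : ℝ) * (x / 2) ^ (2 * (k + 1) - 1) * (1 / 2) / ((k + 1)! : ℝ) ^ 2
        = (x / 2) ^ (2 * k + 1) / ((k ! : ℝ) * (k + 1)!) := by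
    rw [show 2 * (k + 1) - 1 = 2 * k + 1 by omega, factorial_succ]
    push_cast
    field_simp
  refine (hasDerivAt_tsum_half_pow_div (e := fun k => 2 * k) (fun _ => by omega)
    factorial_le_factorial_sq x).congr_deriv ?_
  rw [tsum_eq_zero_add' ((summable_besselI1_term x).congr fun k => (hterm k).symm)]
  simp only [hterm, besselI1]
  simp

lemma hasDerivAt_besselI1 {x : ℝ} (hx : x ≠ 0) :
    HasDerivAt besselI1 (besselI0 x - besselI1 x / x) x := by
  have hterm (k : ℕ) :
      ((2 * k + 1 : ℕ) : ℝ) * (x / 2) ^ (2 * k + 1 - 1) * (1 / 2) / ((k ! : ℝ) * (k + 1)!)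
        = (x / 2) ^ (2 * k) / (k ! : ℝ) ^ 2
          - (x / 2) ^ (2 * k + 1) / ((k ! : ℝ) * (k + 1)!) / x := by
    rw [Nat.add_sub_cancel, factorial_succ, pow_succ]
    push_cast
    field_simp
    ring
  refine (hasDerivAt_tsum_half_pow_div (e := fun k => 2 * k + 1) (fun _ => le_rfl)
    factorial_le_factorial_mul_factorial_succ x).congr_deriv ?_
  simp only [hterm, besselI0, besselI1]
  rw [Summable.tsum_sub (summable_besselI0_term x) ((summable_besselI1_term x).div_const x),
    tsum_div_const]

lemma one_le_besselI0 (x : ℝ) : 1 ≤ besselI0 x := by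
  have h := (summable_besselI0_term x).le_tsum 0 fun k _ => by rw [pow_mul]; positivity
  simpa [besselI0] using h

lemma besselI1_nonneg {x : ℝ} (hx : 0 ≤ x) : 0 ≤ besselI1 x :=
  tsum_nonneg fun k => by positivity

lemma besselI1_le_half_mul_besselI0 {x : ℝ} (hx : 0 ≤ x) :
    besselI1 x ≤ x / 2 * besselI0 x := by
  rw [besselI0, ← tsum_mul_left]
  refine (summable_besselI1_term x).tsum_le_tsum (fun k => ?_)
    ((summable_besselI0_term x).mul_left _)
  calc (x / 2) ^ (2 * k + 1) / ((k ! : ℝ) * (k + 1)!)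
      ≤ (x / 2) ^ (2 * k + 1) / ((k ! : ℝ) * k !) := by
        gcongr; exact k.le_succ
    _ = x / 2 * ((x / 2) ^ (2 * k) / (k ! : ℝ) ^ 2) := by ring

noncomputable def besselRatio (x : ℝ) : ℝ := besselI1 x / besselI0 x

lemma besselRatio_nonneg {x : ℝ} (hx : 0 ≤ x) : 0 ≤ besselRatio x :=
  div_nonneg (besselI1_nonneg hx) (zero_le_one.trans (one_le_besselI0 x))

lemma besselRatio_le_half {x : ℝ} (hx : 0 ≤ x) : besselRatio x ≤ x / 2 :=
  (div_le_iff₀ (zero_lt_one.trans_le (one_le_besselI0 x))).2 (besselI1_le_half_mul_besselI0 hx)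

lemma hasDerivAt_besselRatio {x : ℝ} (hx : x ≠ 0) :
    HasDerivAt besselRatio (1 - besselRatio x / x - besselRatio x ^ 2) x := by
  have h0 : besselI0 x ≠ 0 := (zero_lt_one.trans_le (one_le_besselI0 x)).ne'
  refine ((hasDerivAt_besselI1 hx).div (hasDerivAt_besselI0 x) h0).congr_deriv ?_
  simp only [besselRatio]
  field_simp

section Riccati

variable {r P P' : ℝ → ℝ} {a c : ℝ}

lemma hasDerivAt_mul_exp_neg_half_sub (a c x : ℝ) :
    HasDerivAt (fun x => c * exp (-((x - a) / 2))) (-(c * exp (-((x - a) / 2)) / 2)) x := by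
  have h : HasDerivAt (fun x => -((x - a) / 2)) (-(1 / 2)) x :=
    (((hasDerivAt_id' x).sub_const a).div_const 2).neg
  exact (h.exp.const_mul c).congr_deriv (by ring)

lemma le_add_mul_exp_of_riccati (ha : 0 < a) (hc : 0 < c)
    (hr : ∀ x ∈ Ici a, HasDerivAt r (1 - r x / x - r x ^ 2) x)
    (hP : ∀ x ∈ Ici a, HasDerivAt P (P' x) x)
    (hsuper : ∀ x ∈ Ici a, 1 - P x / x - P x ^ 2 ≤ P' x)
    (hP_ge : ∀ x ∈ Ici a, 1 / 4 ≤ P x) (hra : r a ≤ P a + c) :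
    ∀ x ∈ Ici a, r x ≤ P x + c * exp (-((x - a) / 2)) := by
  intro b hb
  have hB (x : ℝ) (hx : x ∈ Ici a) : HasDerivAt (fun x => P x + c * exp (-((x - a) / 2)))
      (P' x + -(c * exp (-((x - a) / 2)) / 2)) x :=
    (hP x hx).add (hasDerivAt_mul_exp_neg_half_sub a c x)
  refine image_le_of_deriv_right_lt_deriv_boundary'
    (fun x hx => (hr x hx.1).continuousAt.continuousWithinAt)
    (fun x hx => (hr x hx.1).hasDerivWithinAt) (by simpa using hra)
    (fun x hx => (hB x hx.1).continuousAt.continuousWithinAt)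
    (fun x hx => (hB x hx.1).hasDerivWithinAt) (fun x hx hcontact => ?_) (right_mem_Icc.2 hb)
  set E := c * exp (-((x - a) / 2))
  have hE : 0 < E := by positivity
  have hx0 : 0 < x := ha.trans_le hx.1
  have hEx : 0 < E / x := div_pos hE hx0
  have hPE : E / 4 ≤ P x * E := by nlinarith [hP_ge x hx.1]
  have := hsuper x hx.1
  -- with `F r = 1 - r/x - r²`, at contact `F(P + E) = F(P) - E/x - (2P + E)E`, and `2P ≥ 1/2`
  -- puts this below the barrier's slope `P' - E/2`
  rw [hcontact, add_div]
  nlinarith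

lemma sub_mul_exp_le_of_riccati (ha : 0 < a) (hc : 0 < c) (hc1 : c ≤ 1)
    (hr : ∀ x ∈ Ici a, HasDerivAt r (1 - r x / x - r x ^ 2) x)
    (hP : ∀ x ∈ Ici a, HasDerivAt P (P' x) x)
    (hsub : ∀ x ∈ Ici a, P' x ≤ 1 - P x / x - P x ^ 2)
    (hP_ge : ∀ x ∈ Ici a, 3 / 4 ≤ P x) (hra : P a - c ≤ r a) :
    ∀ x ∈ Ici a, P x - c * exp (-((x - a) / 2)) ≤ r x := by
  intro b hb
  have hB (x : ℝ) (hx : x ∈ Ici a) : HasDerivAt (fun x => P x - c * exp (-((x - a) / 2)))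
      (P' x - -(c * exp (-((x - a) / 2)) / 2)) x :=
    (hP x hx).sub (hasDerivAt_mul_exp_neg_half_sub a c x)
  refine image_le_of_deriv_right_lt_deriv_boundary'
    (fun x hx => (hB x hx.1).continuousAt.continuousWithinAt)
    (fun x hx => (hB x hx.1).hasDerivWithinAt) (by simpa using hra)
    (fun x hx => (hr x hx.1).continuousAt.continuousWithinAt)
    (fun x hx => (hr x hx.1).hasDerivWithinAt) (fun x hx hcontact => ?_) (right_mem_Icc.2 hb)
  set E := c * exp (-((x - a) / 2))
  have hE : 0 < E := by positivity
  have hE1 : E ≤ 1 := by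
    have : exp (-((x - a) / 2)) ≤ 1 := exp_le_one_iff.2 (by linarith [hx.1])
    nlinarith [exp_pos (-((x - a) / 2))]
  have hx0 : 0 < x := ha.trans_le hx.1
  have hEx : 0 < E / x := div_pos hE hx0
  have hPE : 3 / 4 * E ≤ P x * E := by nlinarith [hP_ge x hx.1]
  have := hsub x hx.1
  -- at contact, `F(P - E) = F(P) + E/x + (2P - E)E` with `2P - E ≥ 1/2`
  rw [← hcontact, sub_div]
  nlinarith

end Riccati

noncomputable def besselRatioApprox (x : ℝ) : ℝ :=
  1 - 1 / (2 * x) - 1 / (8 * x ^ 2) - 1 / (8 * x ^ 3) - 25 / (128 * x ^ 4)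

lemma hasDerivAt_besselRatioApprox {x : ℝ} (hx : x ≠ 0) :
    HasDerivAt besselRatioApprox
      (1 / (2 * x ^ 2) + 1 / (4 * x ^ 3) + 3 / (8 * x ^ 4) + 25 / (32 * x ^ 5)) x := by
  have ht := hasDerivAt_inv hx
  have h := (((((hasDerivAt_const x (1 : ℝ)).sub (ht.div_const 2)).sub
    ((ht.pow 2).div_const 8)).sub ((ht.pow 3).div_const 8)).sub ((ht.pow 4).const_mul (25 / 128)))
  refine (h.congr_of_eventuallyEq (.of_forall fun y => ?_)).congr_deriv ?_
  · simp only [besselRatioApprox, Pi.sub_apply, Pi.pow_apply]; ring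
  · norm_num; field_simp; ring

lemma hasDerivAt_besselRatioApprox_sub {x : ℝ} (hx : x ≠ 0) :
    HasDerivAt (fun x => besselRatioApprox x - 1 / x ^ 5)
      (1 / (2 * x ^ 2) + 1 / (4 * x ^ 3) + 3 / (8 * x ^ 4) + 25 / (32 * x ^ 5) + 5 / x ^ 6) x := by
  have h := (hasDerivAt_besselRatioApprox hx).sub (((hasDerivAt_pow 5 x).inv (pow_ne_zero 5 hx)))
  refine (h.congr_of_eventuallyEq (.of_forall fun y => ?_)).congr_deriv ?_
  · simp only [Pi.sub_apply, Pi.inv_apply, one_div]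
  · field_simp; ring

lemma riccati_besselRatioApprox_le {x : ℝ} (hx : 0 < x) :
    1 - besselRatioApprox x / x - besselRatioApprox x ^ 2
      ≤ 1 / (2 * x ^ 2) + 1 / (4 * x ^ 3) + 3 / (8 * x ^ 4) + 25 / (32 * x ^ 5) := by
  have key : 1 / (2 * x ^ 2) + 1 / (4 * x ^ 3) + 3 / (8 * x ^ 4) + 25 / (32 * x ^ 5)
      - (1 - besselRatioApprox x / x - besselRatioApprox x ^ 2)
      -- the coefficients of `besselRatioApprox` are those that cancel the defect below order `x⁻⁵`
      = (13 / 16 + 33 / (512 * x) + 25 / (512 * x ^ 2) + 625 / (16384 * x ^ 3)) / x ^ 5 := by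
    simp only [besselRatioApprox]
    field_simp
    ring
  have : 0 ≤ (13 / 16 + 33 / (512 * x) + 25 / (512 * x ^ 2) + 625 / (16384 * x ^ 3)) / x ^ 5 := by
    positivity
  linarith

lemma le_riccati_besselRatioApprox_sub {x : ℝ} (hx : 5 ≤ x) :
    1 / (2 * x ^ 2) + 1 / (4 * x ^ 3) + 3 / (8 * x ^ 4) + 25 / (32 * x ^ 5) + 5 / x ^ 6
      ≤ 1 - (besselRatioApprox x - 1 / x ^ 5) / x - (besselRatioApprox x - 1 / x ^ 5) ^ 2 := by
  have hx0 : 0 < x := by linarith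
  set t := x⁻¹ with ht
  have ht0 : 0 < t := inv_pos.2 hx0
  have ht5 : t ≤ 1 / 5 := by rw [ht, one_div]; exact inv_anti₀ (by norm_num) hx
  have key : 1 - (besselRatioApprox x - 1 / x ^ 5) / x - (besselRatioApprox x - 1 / x ^ 5) ^ 2
      - (1 / (2 * x ^ 2) + 1 / (4 * x ^ 3) + 3 / (8 * x ^ 4) + 25 / (32 * x ^ 5) + 5 / x ^ 6)
      = t ^ 5 * (19 / 16 - 2593 / 512 * t - 153 / 512 * t ^ 2 - 4721 / 16384 * t ^ 3
          - 25 / 64 * t ^ 4 - t ^ 5) := by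
    simp only [besselRatioApprox, ht]
    field_simp
    ring
  have : 0 ≤ 19 / 16 - 2593 / 512 * t - 153 / 512 * t ^ 2 - 4721 / 16384 * t ^ 3
      - 25 / 64 * t ^ 4 - t ^ 5 := by
    nlinarith [pow_pos ht0 2, pow_pos ht0 3, pow_pos ht0 4, pow_pos ht0 5]
  have := mul_nonneg (pow_pos ht0 5).le this
  linarith

lemma three_quarters_le_besselRatioApprox_sub {x : ℝ} (hx : 5 ≤ x) :
    3 / 4 ≤ besselRatioApprox x - 1 / x ^ 5 := by
  have hx0 : 0 < x := by linarith
  set t := x⁻¹ with ht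
  have ht0 : 0 < t := inv_pos.2 hx0
  have ht5 : t ≤ 1 / 5 := by rw [ht, one_div]; exact inv_anti₀ (by norm_num) hx
  have key : besselRatioApprox x - 1 / x ^ 5
      = 1 - t / 2 - t ^ 2 / 8 - t ^ 3 / 8 - 25 / 128 * t ^ 4 - t ^ 5 := by
    simp only [besselRatioApprox, ht]
    field_simp
  rw [key]
  nlinarith [pow_pos ht0 2, pow_pos ht0 3, pow_pos ht0 4, pow_pos ht0 5]

lemma besselRatio_le_besselRatioApprox_add_exp {x : ℝ} (hx : 5 ≤ x) :
    besselRatio x ≤ besselRatioApprox x + 2 * exp (-((x - 5) / 2)) := by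
  refine le_add_mul_exp_of_riccati (by norm_num) two_pos
    (fun y hy => hasDerivAt_besselRatio (by linarith [mem_Ici.1 hy]))
    (fun y hy => hasDerivAt_besselRatioApprox (by linarith [mem_Ici.1 hy]))
    (fun y hy => riccati_besselRatioApprox_le (by linarith [mem_Ici.1 hy]))
    (fun y hy => ?_) ?_ x hx
  · have := three_quarters_le_besselRatioApprox_sub hy
    have : 0 < 1 / y ^ 5 := by have := mem_Ici.1 hy; positivity
    linarith
  · have := besselRatio_le_half (x := 5) (by norm_num)
    norm_num [besselRatioApprox] at this ⊢
    linarith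

lemma besselRatioApprox_sub_sub_exp_le_besselRatio {x : ℝ} (hx : 5 ≤ x) :
    besselRatioApprox x - 1 / x ^ 5 - exp (-((x - 5) / 2)) ≤ besselRatio x := by
  have h := sub_mul_exp_le_of_riccati (by norm_num) one_pos le_rfl
    (fun y hy => hasDerivAt_besselRatio (by linarith [mem_Ici.1 hy]))
    (fun y hy => hasDerivAt_besselRatioApprox_sub (by linarith [mem_Ici.1 hy]))
    (fun y hy => le_riccati_besselRatioApprox_sub hy)
    (fun y hy => three_quarters_le_besselRatioApprox_sub hy) ?_ x hx
  · simpa using h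
  · have := besselRatio_nonneg (x := 5) (by norm_num)
    norm_num [besselRatioApprox]
    linarith

lemma abs_besselRatio_sub_besselRatioApprox_le {x : ℝ} (hx : 5 ≤ x) :
    |besselRatio x - besselRatioApprox x| ≤ 1 / x ^ 5 + 2 * exp (-((x - 5) / 2)) := by
  have hup := besselRatio_le_besselRatioApprox_add_exp hx
  have hlow := besselRatioApprox_sub_sub_exp_le_besselRatio hx
  have hx0 : 0 < x := by linarith
  have : 0 < 1 / x ^ 5 := by positivity
  rw [abs_le]
  constructor <;> linarith [exp_pos (-((x - 5) / 2))]

lemma exp_neg_half_sub_isBigO_inv_pow (a : ℝ) (n : ℕ) :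
    (fun x => exp (-((x - a) / 2))) =O[atTop] fun x => (x ^ n)⁻¹ := by
  have h := (isLittleO_exp_neg_mul_rpow_atTop (by norm_num : (0 : ℝ) < 1 / 2) (-n)).isBigO
  refine (h.const_mul_left (exp (a / 2))).congr' (.of_forall fun x => ?_) ?_
  · simp only [← exp_add]; ring_nf
  · filter_upwards [eventually_ge_atTop 0] with x hx
    rw [rpow_neg hx, rpow_natCast]

lemma besselRatio_sub_besselRatioApprox_isBigO :
    (fun x => besselRatio x - besselRatioApprox x) =O[atTop] fun x => (x ^ 5)⁻¹ := by
  have hbound : (fun x => besselRatio x - besselRatioApprox x)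
      =O[atTop] fun x => 1 / x ^ 5 + 2 * exp (-((x - 5) / 2)) :=
    .of_bound 1 <| (eventually_ge_atTop 5).mono fun x hx => by
      have hx0 : 0 < x := by linarith
      rw [one_mul, Real.norm_eq_abs, norm_of_nonneg (by positivity)]
      exact abs_besselRatio_sub_besselRatioApprox_le hx
  refine hbound.trans (.add ?_ ((exp_neg_half_sub_isBigO_inv_pow 5 5).const_mul_left 2))
  exact (isBigO_refl _ _).congr_left fun x => (one_div _).symm

/-- Asymptotic expansion of `I₁(x)/I₀(x)` as `x → +∞`:
`I₁(x)/I₀(x) = 1 − 1/(2x) − 1/(8x²) − 1/(8x³) − 25/(128x⁴) + O(1/x⁵)`. -/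
theorem besselI1_div_besselI0_asymptotic_expansion :
    (fun x : ℝ => x ^ 4 * (besselI1 x / besselI0 x - 1 + 1 / (2 * x)
        + 1 / (8 * x ^ 2) + 1 / (8 * x ^ 3) + 25 / (128 * x ^ 4)))
      =O[atTop] fun x : ℝ => 1 / x := by
  refine ((isBigO_refl (fun x : ℝ => x ^ 4) atTop).mul
    besselRatio_sub_besselRatioApprox_isBigO).congr' ?_ ?_
  · refine .of_forall fun x => ?_
    simp only [besselRatio, besselRatioApprox]
    ring
  · filter_upwards [eventually_ne_atTop 0] with x hx
    field_simp
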